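/- arXiv:0803.4243 — 7 statements merged into one kernel-verified Lean document; each statement's English description precedes it below -/
import Mathlib

section
/- For nonempty compact convex subsets A, B, C, D of a topological vector space, the relation defined by (A,B) ~ (C,D) iff A + D = B + C (Minkowski sum) is an equivalence relation on pairs of such sets. -/
/-!
Only transitivity needs an argument: from `A + D = B + C` and `C + F = D + E` one gets
`(A + F) + (C + D) = (B + E) + (C + D)`, and the common compact summand `C + D` cancels
(Rådström). To cancel `K` from `A + K ⊆ B + K` with `B` closed and convex, iterate the inclusion:
`n • A + K ⊆ n • B + K`, convexity of `B` making `n • B` the `n`-fold sum `B + ⋯ + B`.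
So `n • a + c = n • bₙ + kₙ` with `bₙ ∈ B` and `c, kₙ ∈ K`, i.e. `bₙ = a + n⁻¹ • (c - kₙ)`,
which tends to `a` because `K - K` is bounded.
-/

open Pointwise Filter Topology Bornology

section Convex

variable {𝕜 E : Type*} [Field 𝕜] [LinearOrder 𝕜] [IsStrictOrderedRing 𝕜]
  [AddCommGroup E] [Module 𝕜 E]

theorem Convex.natCast_smul_add_subset_of_add_subset {A B K : Set E} (hB : Convex 𝕜 B)
    (h : A + K ⊆ B + K) {n : ℕ} (hn : 1 ≤ n) : (n : 𝕜) • A + K ⊆ (n : 𝕜) • B + K := by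
  induction n, hn using Nat.le_induction with
  | base => simpa only [Nat.cast_one, one_smul] using h
  | succ n _ ih =>
    calc ((n + 1 : ℕ) : 𝕜) • A + K ⊆ (n : 𝕜) • A + (1 : 𝕜) • A + K := by
          push_cast
          exact Set.add_subset_add_right (Set.add_smul_subset _ _ _)
      _ = (n : 𝕜) • A + (A + K) := by rw [one_smul, add_assoc]
      _ ⊆ (n : 𝕜) • A + (B + K) := Set.add_subset_add_left h
      _ = B + ((n : 𝕜) • A + K) := add_left_comm _ _ _
      _ ⊆ B + ((n : 𝕜) • B + K) := Set.add_subset_add_left ih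
      _ = ((n + 1 : ℕ) : 𝕜) • B + K := by
          rw [Nat.cast_succ, hB.add_smul n.cast_nonneg zero_le_one, one_smul, add_comm _ B,
            add_assoc]

end Convex

section Cancellation

variable {E : Type*} [AddCommGroup E] [Module ℝ E] [TopologicalSpace E] [IsTopologicalAddGroup E]

theorem Convex.subset_of_add_subset_add {A B K : Set E} (hBc : Convex ℝ B) (hB : IsClosed B)
    (hK : IsVonNBounded ℝ K) (hKne : K.Nonempty) (h : A + K ⊆ B + K) : A ⊆ B := by
  intro a ha
  obtain ⟨c, hc⟩ := hKne
  have hdecomp : ∀ n : ℕ, ∃ k ∈ K, a + (1 / ((n : ℝ) + 1)) • (c - k) ∈ B := by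
    intro n
    have hn : ((n + 1 : ℕ) : ℝ) ≠ 0 := by positivity
    obtain ⟨_, ⟨b, hb, rfl⟩, k, hk, hbk⟩ :=
      hBc.natCast_smul_add_subset_of_add_subset h n.succ_pos
        (Set.add_mem_add (Set.smul_mem_smul_set ha) hc)
    refine ⟨k, hk, ?_⟩
    convert hb using 1
    apply smul_right_injective E hn
    simp only [smul_add, one_div, Nat.cast_succ] at hbk hn ⊢
    rw [smul_inv_smul₀ hn, ← add_sub_assoc, ← hbk, add_sub_cancel_right]
  choose k hk hkB using hdecomp
  have hsmall : Tendsto (fun n : ℕ => (1 / ((n : ℝ) + 1)) • (c - k n)) atTop (𝓝 0) :=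
    (hK.sub hK).smul_tendsto_zero (.of_forall fun n => Set.sub_mem_sub hc (hk n))
      tendsto_one_div_add_atTop_nhds_zero_nat
  exact hB.mem_of_tendsto (by simpa using hsmall.const_add a) (.of_forall hkB)

theorem Convex.eq_of_add_eq_add {A B K : Set E} (hAc : Convex ℝ A) (hBc : Convex ℝ B)
    (hA : IsClosed A) (hB : IsClosed B) (hK : IsVonNBounded ℝ K) (hKne : K.Nonempty)
    (h : A + K = B + K) : A = B :=
  (hBc.subset_of_add_subset_add hB hK hKne h.le).antisymm
    (hAc.subset_of_add_subset_add hA hK hKne h.ge)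

end Cancellation

/-- For nonempty compact convex subsets `A, B, C, D` of a (Hausdorff)
topological vector space `M`, the relation on pairs given by
`(A,B) ~ (C,D) ↔ A + D = B + C` (Minkowski sum) is an equivalence relation. -/
theorem minkowski_pair_relation_equivalence
    (M : Type*) [AddCommGroup M] [Module ℝ M] [TopologicalSpace M]
    [IsTopologicalAddGroup M] [ContinuousSMul ℝ M] [T2Space M] :
    Equivalence (fun p q : {A : Set M // A.Nonempty ∧ IsCompact A ∧ Convex ℝ A} ×
                            {A : Set M // A.Nonempty ∧ IsCompact A ∧ Convex ℝ A} =>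
      (p.1 : Set M) + (q.2 : Set M) = (p.2 : Set M) + (q.1 : Set M)) := by
  refine ⟨fun _ => add_comm _ _, fun h => (add_comm _ _).trans (h.symm.trans (add_comm _ _)),
    fun {p q r} => ?_⟩
  obtain ⟨⟨A, -, hA⟩, ⟨B, -, hB⟩⟩ := p
  obtain ⟨⟨C, hC⟩, ⟨D, hD⟩⟩ := q
  obtain ⟨⟨E, -, hE⟩, ⟨F, -, hF⟩⟩ := r
  intro (hABCD : A + D = B + C) (hCDEF : C + F = D + E)
  refine (hA.2.add hF.2).eq_of_add_eq_add (hB.2.add hE.2) (hA.1.add hF.1).isClosed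
    (hB.1.add hE.1).isClosed ((hC.2.1.add hD.2.1).isVonNBounded ℝ) (hC.1.add hD.1) ?_
  calc A + F + (C + D) = (A + D) + (C + F) := by abel
    _ = (B + C) + (D + E) := by rw [hABCD, hCDEF]
    _ = B + E + (C + D) := by abel
end

section
/- Let f : X → Y be a continuous affine surjective open map of compact convex subsets of Hausdorff locally convex spaces such that every fiber f⁻¹(y) has more than one point. Then for every nonempty compact convex subset B ⊆ Y, there are at least two distinct nonempty compact convex subsets A ⊆ X with f(A) = B. -/
/-!
Besides the full preimage `A = X ∩ f⁻¹(B)`, take the closed convex hull `A'` of the points of `A`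
minimizing a continuous functional `ℓ` in their fibre; it still maps onto `B`. Choose `ℓ` to
separate two points `x₁, x₂` of the fibre over an extreme point `y₀` of `B`, with `ℓ x₁ < m < ℓ x₂`.
Openness of `f` keeps the fibrewise minimum of `ℓ` below `m` over a neighbourhood `V` of `y₀`, and
by Milman's lemma `y₀` is not in the closed convex hull `C` of `B \ V`. As `y₀` is extreme, a convex
combination of minimizers whose image is close to `y₀` puts little weight over `C`, so `ℓ` stays
below `ℓ x₂` on `A'` near `x₂`. Hence `x₂ ∈ A \ A'`.
-/

open Set Topology

section Affine

variable {E F G : Type*} [AddCommGroup E] [Module ℝ E] [AddCommGroup F] [Module ℝ F]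
  [AddCommGroup G] [Module ℝ G]

def IsAffineOn (f : E → F) (X : Set E) : Prop :=
  ∀ x ∈ X, ∀ y ∈ X, ∀ t ∈ Icc (0 : ℝ) 1, f (t • x + (1 - t) • y) = t • f x + (1 - t) • f y

variable {f : E → F} {X : Set E}

theorem IsAffineOn.convex_inter_preimage (hf : IsAffineOn f X) (hX : Convex ℝ X) {K : Set F}
    (hK : Convex ℝ K) : Convex ℝ (X ∩ f ⁻¹' K) := by
  rintro x ⟨hxX, hxK⟩ y ⟨hyX, hyK⟩ a b ha hb hab
  obtain rfl : b = 1 - a := by linarith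
  refine ⟨hX hxX hyX ha hb hab, ?_⟩
  rw [mem_preimage, hf x hxX y hyX a ⟨ha, by linarith⟩]
  exact hK hxK hyK ha hb hab

theorem IsAffineOn.prodMk {g : E → G} (hf : IsAffineOn f X) (hg : IsAffineOn g X) :
    IsAffineOn (fun x => (f x, g x)) X := fun x hx y hy t ht =>
  Prod.ext (hf x hx y hy t ht) (hg x hx y hy t ht)

theorem LinearMap.isAffineOn (ℓ : E →ₗ[ℝ] G) (X : Set E) : IsAffineOn ℓ X :=
  fun x _ y _ t _ => by simp

end Affine

section ConvexJoinFrom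

variable {F : Type*} [AddCommGroup F] [Module ℝ F]

/-- The points `a • c + (1 - a) • b` of `convexJoin ℝ s t` with weight `a ≥ δ` on `c ∈ s`. -/
def convexJoinFrom (δ : ℝ) (s t : Set F) : Set F :=
  (fun p : ℝ × F × F => p.1 • p.2.1 + (1 - p.1) • p.2.2) '' (Icc δ 1 ×ˢ s ×ˢ t)

theorem convexJoinFrom_zero (s t : Set F) : convexJoinFrom 0 s t = convexJoin ℝ s t := by
  ext y
  simp only [convexJoinFrom, mem_convexJoin, segment, mem_image, mem_prod, mem_Icc, Prod.exists]
  constructor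
  · rintro ⟨a, c, b, ⟨⟨ha, ha1⟩, hc, hb⟩, rfl⟩
    exact ⟨c, hc, b, hb, a, 1 - a, ha, by linarith, by ring, rfl⟩
  · rintro ⟨c, hc, b, hb, a, a', ha, ha', haa', rfl⟩
    obtain rfl : a' = 1 - a := by linarith
    exact ⟨a, c, b, ⟨⟨ha, by linarith⟩, hc, hb⟩, rfl⟩

section Topological

variable [TopologicalSpace F] [ContinuousAdd F] [ContinuousSMul ℝ F]

theorem IsCompact.convexJoinFrom (δ : ℝ) {s t : Set F} (hs : IsCompact s) (ht : IsCompact t) :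
    IsCompact (convexJoinFrom δ s t) :=
  (isCompact_Icc.prod (hs.prod ht)).image (by fun_prop)

theorem IsCompact.convexJoin {s t : Set F} (hs : IsCompact s) (ht : IsCompact t) :
    IsCompact (convexJoin ℝ s t) :=
  convexJoinFrom_zero s t ▸ hs.convexJoinFrom 0 ht

theorem isCompact_convexHull_union {s t : Set F} (hs : IsCompact s) (hs' : Convex ℝ s)
    (ht : IsCompact t) (ht' : Convex ℝ t) : IsCompact (convexHull ℝ (s ∪ t)) := by
  rcases s.eq_empty_or_nonempty with rfl | hs₀
  · rwa [empty_union, ht'.convexHull_eq]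
  rcases t.eq_empty_or_nonempty with rfl | ht₀
  · rwa [union_empty, hs'.convexHull_eq]
  rw [hs'.convexHull_union ht' hs₀ ht₀]
  exact hs.convexJoin ht

theorem isCompact_convexHull_biUnion {ι : Type*} (I : Finset ι) {K : ι → Set F}
    (hK : ∀ i ∈ I, IsCompact (K i)) (hK' : ∀ i ∈ I, Convex ℝ (K i)) :
    IsCompact (convexHull ℝ (⋃ i ∈ I, K i)) := by
  classical
  induction I using Finset.induction_on with
  | empty => simp
  | insert a I _ ih =>
    rw [Finset.set_biUnion_insert, ← convexHull_convexHull_union_right]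
    simp only [Finset.mem_insert, forall_eq_or_imp] at hK hK'
    exact isCompact_convexHull_union hK.1 hK'.1 (ih hK.2 hK'.2) (convex_convexHull ℝ _)

end Topological

theorem notMem_convexJoinFrom_of_mem_extremePoints {s t : Set F} {y : F} {δ : ℝ}
    (hst : s ⊆ t) (hy : y ∈ t.extremePoints ℝ) (hys : y ∉ s) (hδ : 0 < δ) :
    y ∉ convexJoinFrom δ s t := by
  rintro ⟨⟨a, c, b⟩, ⟨⟨ha, ha1⟩, hc, hb⟩, hcb⟩
  rcases ha1.eq_or_lt with rfl | ha1
  · simp only [one_smul, sub_self, zero_smul, add_zero] at hcb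
    exact hys (hcb ▸ hc)
  · have hseg : y ∈ openSegment ℝ c b := ⟨a, 1 - a, hδ.trans_le ha, by linarith, by ring, hcb⟩
    exact hys (mem_extremePoints_iff_left.1 hy |>.2 c (hst hc) b hb hseg ▸ hc)

theorem snd_le_of_mem_convexHull_union_prod {s t : Set F} (hs : Convex ℝ s) (ht : Convex ℝ t)
    (ht₀ : t.Nonempty) {δ M m : ℝ} (hδ : 0 ≤ δ) (hmM : m ≤ M) {y : F} {r : ℝ}
    (hyr : (y, r) ∈ convexHull ℝ (s ×ˢ Iic M ∪ t ×ˢ Iic m)) (hy : y ∉ convexJoinFrom δ s t) :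
    r ≤ m + δ * (M - m) := by
  rcases (s ×ˢ Iic M).eq_empty_or_nonempty with hs₀ | hs₀
  · rw [hs₀, empty_union, (ht.prod (convex_Iic m)).convexHull_eq] at hyr
    have : r ≤ m := hyr.2
    nlinarith
  rw [(hs.prod (convex_Iic M)).convexHull_union (ht.prod (convex_Iic m)) hs₀
    (ht₀.prod nonempty_Iic), mem_convexJoin] at hyr
  obtain ⟨⟨c, r₁⟩, ⟨hc, hr₁⟩, ⟨b, r₂⟩, ⟨hb, hr₂⟩, a, a', ha, ha', haa', hcb⟩ := hyr
  obtain rfl : a' = 1 - a := by linarith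
  simp only [Prod.ext_iff, Prod.fst_add, Prod.snd_add, Prod.smul_fst, Prod.smul_snd,
    smul_eq_mul] at hcb
  have hδa : a < δ := by
    by_contra! h
    exact hy ⟨(a, c, b), ⟨⟨h, by linarith⟩, hc, hb⟩, hcb.1⟩
  rw [← hcb.2]
  have : r₁ ≤ M := hr₁
  have : r₂ ≤ m := hr₂
  nlinarith

end ConvexJoinFrom

section Milman

variable {E : Type*} [AddCommGroup E] [Module ℝ E] [TopologicalSpace E]
  [IsTopologicalAddGroup E] [ContinuousSMul ℝ E]

theorem exists_isClosed_convex_mem_nhds_zero_subset [LocallyConvexSpace ℝ E] {W : Set E}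
    (hW : W ∈ 𝓝 (0 : E)) : ∃ N ∈ 𝓝 (0 : E), IsClosed N ∧ Convex ℝ N ∧ N ⊆ W := by
  obtain ⟨C, ⟨hC, hCcl⟩, hCW⟩ := (closed_nhds_basis (0 : E)).mem_iff.1 hW
  obtain ⟨S, ⟨hS, hSv⟩, hSC⟩ := (LocallyConvexSpace.convex_basis_zero ℝ E).mem_iff.1 hC
  exact ⟨closure S, Filter.mem_of_superset hS subset_closure, isClosed_closure, hSv.closure,
    (closure_minimal hSC hCcl).trans hCW⟩

/-- A form of Milman's lemma. -/
theorem notMem_closedConvexHull_diff_of_mem_extremePoints [LocallyConvexSpace ℝ E] [T2Space E]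
    {B V : Set E} (hB : IsCompact B) (hBv : Convex ℝ B) {y : E} (hy : y ∈ B.extremePoints ℝ)
    (hV : IsOpen V) (hyV : y ∈ V) : y ∉ closedConvexHull ℝ (B \ V) := by
  obtain ⟨N, hN, hNcl, hNv, hNV⟩ := exists_isClosed_convex_mem_nhds_zero_subset
    (W := (y - ·) ⁻¹' V) ((continuous_sub_left y).continuousAt.preimage_mem_nhds
      (by rwa [sub_zero, hV.mem_nhds_iff]))
  -- covering `B \ V` by the closed convex pieces `B ∩ (z + N)`, none of which contains `y`
  set piece : E → Set E := fun z => B ∩ (· - z) ⁻¹' N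
  obtain ⟨I, hIB, hcover⟩ := (hB.diff hV).elim_nhds_subcover (fun z => (· - z) ⁻¹' N)
    fun z _ => (continuous_sub_right z).continuousAt.preimage_mem_nhds (by rwa [sub_self])
  set K := convexHull ℝ (⋃ z ∈ I, piece z)
  have hK : IsCompact K := isCompact_convexHull_biUnion I
    (fun z _ => hB.inter_right (hNcl.preimage (continuous_sub_right z)))
    (fun z _ => hBv.inter (by simpa [sub_eq_add_neg] using hNv.translate_preimage_left (-z)))
  have hBVK : closedConvexHull ℝ (B \ V) ⊆ K := by
    refine closedConvexHull_min (fun x hx => subset_convexHull ℝ _ ?_) (convex_convexHull ℝ _)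
      hK.isClosed
    obtain ⟨z, hz, hxz⟩ := mem_iUnion₂.1 (hcover hx)
    exact mem_iUnion₂.2 ⟨z, hz, hx.1, hxz⟩
  have hKB : K ⊆ B := convexHull_min (iUnion₂_subset fun _ _ => inter_subset_left) hBv
  intro hyBV
  obtain ⟨z, hz, -, hyz⟩ := mem_iUnion₂.1 <| extremePoints_convexHull_subset <|
    inter_extremePoints_subset_extremePoints_of_subset hKB ⟨hBVK hyBV, hy⟩
  exact (hIB z hz).2 (by simpa using hNV hyz)

end Milman

section Separation

variable {E F : Type*} [AddCommGroup E] [Module ℝ E] [TopologicalSpace E]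
  [IsTopologicalAddGroup E] [ContinuousConstSMul ℝ E]
  [AddCommGroup F] [Module ℝ F] [TopologicalSpace F] [IsTopologicalAddGroup F]
  [ContinuousSMul ℝ F] [LocallyConvexSpace ℝ F] [T2Space F]

theorem notMem_closedConvexHull_of_mem_extremePoints {X : Set E} (hX : Convex ℝ X) {f : E → F}
    (hf : IsAffineOn f X) {B : Set F} (hB : IsCompact B) (hBv : Convex ℝ B) {y₀ : F}
    (hy₀ : y₀ ∈ B.extremePoints ℝ) {V : Set F} (hV : IsOpen V) (hy₀V : y₀ ∈ V) (ℓ : E →L[ℝ] ℝ)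
    {S : Set E} (hSX : S ⊆ X) (hSB : MapsTo f S B) {m M : ℝ} (hSM : ∀ x ∈ S, ℓ x ≤ M)
    (hSm : ∀ x ∈ S, f x ∈ V → ℓ x ≤ m) {x₀ : E} (hfx₀ : f x₀ = y₀)
    (hcont : ContinuousWithinAt f X x₀) (hm : m < ℓ x₀) : x₀ ∉ closedConvexHull ℝ S := by
  set M' := max M m
  obtain ⟨δ, hδ, hδM⟩ := exists_pos_mul_lt (sub_pos.2 hm) (M' - m)
  set C := closedConvexHull ℝ (B \ V)
  have hCB : C ⊆ B := closedConvexHull_min sdiff_subset hBv hB.isClosed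
  set D := convexJoinFrom δ C B
  have hy₀D : y₀ ∉ D := notMem_convexJoinFrom_of_mem_extremePoints hCB hy₀
    (notMem_closedConvexHull_diff_of_mem_extremePoints hB hBv hy₀ hV hy₀V) hδ
  -- `x ↦ (f x, ℓ x)` maps `S` into the convex set `Q`, over which `ℓ` is small away from `D`
  set Q : Set (F × ℝ) := convexHull ℝ (C ×ˢ Iic M' ∪ B ×ˢ Iic m)
  set Z := X ∩ (fun x => (f x, ℓ x)) ⁻¹' Q
  have hSZ : S ⊆ Z := by
    refine fun x hx => ⟨hSX hx, subset_convexHull ℝ _ ?_⟩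
    by_cases hxV : f x ∈ V
    · exact Or.inr ⟨hSB hx, hSm x hx hxV⟩
    · exact Or.inl ⟨subset_closedConvexHull ⟨hSB hx, hxV⟩, le_max_of_le_left (hSM x hx)⟩
  have hZ : Convex ℝ Z :=
    (hf.prodMk (ℓ.toLinearMap.isAffineOn X)).convex_inter_preimage hX (convex_convexHull ℝ _)
  have hDc : Dᶜ ∈ 𝓝 (f x₀) :=
    ((hB.of_isClosed_subset isClosed_closedConvexHull hCB).convexJoinFrom δ hB
      |>.isClosed.isOpen_compl).mem_nhds (hfx₀ ▸ hy₀D)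
  have hW : {x | f x ∉ D} ∩ {x | m + δ * (M' - m) < ℓ x} ∈ 𝓝[X] x₀ :=
    Filter.inter_mem (hcont hDc) <| mem_nhdsWithin_of_mem_nhds <|
      (isOpen_lt continuous_const ℓ.continuous).mem_nhds
        (show m + δ * (M' - m) < ℓ x₀ by linarith)
  obtain ⟨U, hU, hx₀U, hUW⟩ := mem_nhdsWithin.1 hW
  intro hx₀S
  rw [closedConvexHull_eq_closure_convexHull] at hx₀S
  obtain ⟨x, hxU, hxZ⟩ := mem_closure_iff.1 (closure_mono (convexHull_min hSZ hZ) hx₀S) U hU hx₀U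
  obtain ⟨hfxD, hℓx⟩ := hUW ⟨hxU, hxZ.1⟩
  have := snd_le_of_mem_convexHull_union_prod convex_closedConvexHull hBv ⟨y₀, hy₀.1⟩ hδ.le
    (le_max_right M m) hxZ.2 hfxD
  exact this.not_gt hℓx

end Separation

section FiberMinimizers

variable {E F : Type*}

def fiberMinimizers (g : E → ℝ) (f : E → F) (A : Set E) : Set E :=
  {x ∈ A | ∀ x' ∈ A, f x' = f x → g x ≤ g x'}

theorem fiberMinimizers_subset (g : E → ℝ) (f : E → F) (A : Set E) :
    fiberMinimizers g f A ⊆ A :=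
  sep_subset _ _

variable [TopologicalSpace E] [TopologicalSpace F]

theorem image_fiberMinimizers [T1Space F] {g : E → ℝ} {f : E → F} {A : Set E}
    (hA : IsCompact A) (hf : ContinuousOn f A) (hg : ContinuousOn g A) :
    f '' fiberMinimizers g f A = f '' A := by
  refine (image_mono (fiberMinimizers_subset g f A)).antisymm ?_
  rintro _ ⟨x, hx, rfl⟩
  obtain ⟨u, hu, hAu⟩ := continuousOn_iff_isClosed.1 hf {f x} isClosed_singleton
  have hfiber : IsCompact (A ∩ f ⁻¹' {f x}) := by
    rw [inter_comm, hAu, inter_comm]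
    exact hA.inter_right hu
  obtain ⟨z, ⟨hzA, hzx⟩, hzmin⟩ :=
    hfiber.exists_isMinOn ⟨x, hx, rfl⟩ (hg.mono inter_subset_left)
  exact ⟨z, ⟨hzA, fun x' hx' hfx' => hzmin ⟨hx', hfx'.trans hzx⟩⟩, hzx⟩

theorem exists_isOpen_fiberMinimizers_lt {X : Set E} {Y B : Set F} {f : E → F}
    (hopen : ∀ U : Set E, IsOpen U → ∃ V : Set F, IsOpen V ∧ f '' (U ∩ X) = V ∩ Y)
    (hBY : B ⊆ Y) {ℓ : E → ℝ} (hℓ : Continuous ℓ) {x₁ : E} (hx₁ : x₁ ∈ X) {m : ℝ}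
    (hm : ℓ x₁ < m) :
    ∃ V, IsOpen V ∧ f x₁ ∈ V ∧ ∀ x ∈ fiberMinimizers ℓ f (X ∩ f ⁻¹' B), f x ∈ V → ℓ x < m := by
  obtain ⟨V, hV, hUV⟩ := hopen {x | ℓ x < m} (isOpen_lt hℓ continuous_const)
  refine ⟨V, hV, (hUV ▸ mem_image_of_mem f ⟨hm, hx₁⟩ : f x₁ ∈ V ∩ Y).1, ?_⟩
  rintro x ⟨⟨-, hxB⟩, hxmin⟩ hxV
  obtain ⟨u, ⟨hu, huX⟩, hfu⟩ := (hUV ▸ ⟨hxV, hBY hxB⟩ : f x ∈ f '' ({x | ℓ x < m} ∩ X))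
  exact (hxmin u ⟨huX, show f u ∈ B from hfu ▸ hxB⟩ hfu).trans_lt hu

end FiberMinimizers

theorem exists_continuousLinearMap_lt_of_ne {E : Type*} [AddCommGroup E] [Module ℝ E]
    [TopologicalSpace E] [IsTopologicalAddGroup E] [ContinuousSMul ℝ E] [LocallyConvexSpace ℝ E]
    [T2Space E] {x y : E} (h : x ≠ y) : ∃ ℓ : E →L[ℝ] ℝ, ℓ x < ℓ y := by
  obtain ⟨ℓ, hℓ⟩ := SeparatingDual.exists_separating_of_ne (R := ℝ) h
  rcases hℓ.lt_or_gt with hlt | hgt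
  · exact ⟨ℓ, hlt⟩
  · exact ⟨-ℓ, by simpa using hgt⟩

theorem cc_fibers_nontrivial_general
    (E F : Type*) [AddCommGroup E] [Module ℝ E] [TopologicalSpace E]
    [IsTopologicalAddGroup E] [ContinuousSMul ℝ E] [T2Space E] [LocallyConvexSpace ℝ E]
    [AddCommGroup F] [Module ℝ F] [TopologicalSpace F]
    [IsTopologicalAddGroup F] [ContinuousSMul ℝ F] [T2Space F] [LocallyConvexSpace ℝ F]
    (X : Set E) (Y : Set F) (hX : IsCompact X) (hXv : Convex ℝ X)
    (f : E → F) (hcont : ContinuousOn f X)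
    (haff : ∀ x ∈ X, ∀ y ∈ X, ∀ t : ℝ, t ∈ Set.Icc (0:ℝ) 1 →
      f (t • x + (1 - t) • y) = t • f x + (1 - t) • f y)
    (hsurj : f '' X = Y)
    (hopen : ∀ U : Set E, IsOpen U → ∃ V : Set F, IsOpen V ∧ f '' (U ∩ X) = V ∩ Y)
    (hfib : ∀ y ∈ Y, ∃ x₁ ∈ X, ∃ x₂ ∈ X, x₁ ≠ x₂ ∧ f x₁ = y ∧ f x₂ = y) :
    ∀ B : Set F, B.Nonempty → IsCompact B → Convex ℝ B → B ⊆ Y →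
      ∃ A₁ A₂ : Set E, A₁ ≠ A₂ ∧
        (A₁.Nonempty ∧ IsCompact A₁ ∧ Convex ℝ A₁ ∧ A₁ ⊆ X ∧ f '' A₁ = B) ∧
        (A₂.Nonempty ∧ IsCompact A₂ ∧ Convex ℝ A₂ ∧ A₂ ⊆ X ∧ f '' A₂ = B) := by
  intro B hBne hB hBv hBY
  set A := X ∩ f ⁻¹' B
  have hA : IsCompact A := hX.of_isClosed_subset
    (hcont.preimage_isClosed_of_isClosed hX.isClosed hB.isClosed) inter_subset_left
  have hAv : Convex ℝ A := IsAffineOn.convex_inter_preimage haff hXv hBv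
  have hfA : f '' A = B := by rw [image_inter_preimage, hsurj, inter_eq_right.2 hBY]
  obtain ⟨y₀, hy₀⟩ := hB.extremePoints_nonempty hBne
  obtain ⟨x₁, hx₁, x₂, hx₂, hne, hfx₁, hfx₂⟩ := hfib y₀ (hBY hy₀.1)
  obtain ⟨ℓ, hℓ⟩ := exists_continuousLinearMap_lt_of_ne hne
  obtain ⟨m, hm₁, hm₂⟩ := exists_between hℓ
  obtain ⟨V, hV, hy₀V, hSV⟩ := exists_isOpen_fiberMinimizers_lt hopen hBY ℓ.continuous hx₁ hm₁
  obtain ⟨M, hM⟩ := (hA.image ℓ.continuous).bddAbove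
  set S := fiberMinimizers ℓ f A
  have hSA : closedConvexHull ℝ S ⊆ A :=
    closedConvexHull_min (fiberMinimizers_subset ℓ f A) hAv hA.isClosed
  have hx₂S : x₂ ∉ closedConvexHull ℝ S := notMem_closedConvexHull_of_mem_extremePoints hXv
    haff hB hBv hy₀ hV (hfx₁ ▸ hy₀V) ℓ ((fiberMinimizers_subset ℓ f A).trans inter_subset_left)
    (fun x hx => hx.1.2) (fun x hx => hM (mem_image_of_mem ℓ hx.1))
    (fun x hx h => (hSV x hx h).le) hfx₂ (hcont x₂ hx₂) hm₂
  have hfS : f '' closedConvexHull ℝ S = B := (hfA ▸ image_mono hSA).antisymm <| by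
    rw [← hfA, ← image_fiberMinimizers hA (hcont.mono inter_subset_left)
      ℓ.continuous.continuousOn]
    exact image_mono subset_closedConvexHull
  refine ⟨A, closedConvexHull ℝ S, fun h => hx₂S (h ▸ ⟨hx₂, show f x₂ ∈ B from hfx₂ ▸ hy₀.1⟩),
    ⟨image_nonempty.1 (hfA ▸ hBne), hA, hAv, inter_subset_left, hfA⟩,
    ⟨image_nonempty.1 (hfS ▸ hBne), hA.of_isClosed_subset isClosed_closedConvexHull hSA,
      convex_closedConvexHull, hSA.trans inter_subset_left, hfS⟩⟩

/-- Let `f : X → Y` be a continuous affine surjective open map of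
compact convex subsets of Hausdorff locally convex spaces such that every fiber
has more than one point. Then for every nonempty compact convex `B ⊆ Y` there are
at least two distinct nonempty compact convex subsets `A ⊆ X` with `f(A) = B`. -/
theorem cc_fibers_nontrivial
    (E F : Type*) [AddCommGroup E] [Module ℝ E] [TopologicalSpace E]
    [IsTopologicalAddGroup E] [ContinuousSMul ℝ E] [T2Space E] [LocallyConvexSpace ℝ E]
    [AddCommGroup F] [Module ℝ F] [TopologicalSpace F]
    [IsTopologicalAddGroup F] [ContinuousSMul ℝ F] [T2Space F] [LocallyConvexSpace ℝ F]
    (X : Set E) (Y : Set F) (hX : IsCompact X) (hXv : Convex ℝ X)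
    (hY : IsCompact Y) (hYv : Convex ℝ Y)
    (f : E → F) (hcont : ContinuousOn f X) (hmaps : Set.MapsTo f X Y)
    (haff : ∀ x ∈ X, ∀ y ∈ X, ∀ t : ℝ, t ∈ Set.Icc (0:ℝ) 1 →
      f (t • x + (1 - t) • y) = t • f x + (1 - t) • f y)
    (hsurj : f '' X = Y)
    (hopen : ∀ U : Set E, IsOpen U → ∃ V : Set F, IsOpen V ∧ f '' (U ∩ X) = V ∩ Y)
    (hfib : ∀ y ∈ Y, ∃ x₁ ∈ X, ∃ x₂ ∈ X, x₁ ≠ x₂ ∧ f x₁ = y ∧ f x₂ = y) :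
    ∀ B : Set F, B.Nonempty → IsCompact B → Convex ℝ B → B ⊆ Y →
      ∃ A₁ A₂ : Set E, A₁ ≠ A₂ ∧
        (A₁.Nonempty ∧ IsCompact A₁ ∧ Convex ℝ A₁ ∧ A₁ ⊆ X ∧ f '' A₁ = B) ∧
        (A₂.Nonempty ∧ IsCompact A₂ ∧ Convex ℝ A₂ ∧ A₂ ⊆ X ∧ f '' A₂ = B) :=
  cc_fibers_nontrivial_general E F X Y hX hXv f hcont haff hsurj hopen hfib
end

section
/- Let f : X → Y be a continuous affine map of compact convex subsets of Hausdorff locally convex spaces. If the induced map cc(f) : cc(X) → cc(Y) between hyperspaces of nonempty compact convex subsets (with Vietoris topologies) is open, then f itself is open. -/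
/-- Hyperspace of nonempty compact convex subsets of `E` contained in `X`. -/
abbrev CCIn (E : Type*) [AddCommGroup E] [Module ℝ E] [TopologicalSpace E]
    (X : Set E) : Type _ :=
  {A : Set E // A.Nonempty ∧ IsCompact A ∧ Convex ℝ A ∧ A ⊆ X}

/-- Vietoris topology on `CCIn E X`. -/
def vietorisCC (E : Type*) [AddCommGroup E] [Module ℝ E] [TopologicalSpace E]
    (X : Set E) : TopologicalSpace (CCIn E X) :=
  TopologicalSpace.generateFrom
    ({S | ∃ U : Set E, IsOpen U ∧ S = {A : CCIn E X | (A : Set E) ⊆ U}} ∪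
     {S | ∃ U : Set E, IsOpen U ∧ S = {A : CCIn E X | ((A : Set E) ∩ U).Nonempty}})

/-!
Points of `X` sit in `cc(X)` as singletons, and the singleton map is continuous for the Vietoris
topology. For open `U ⊆ E`, the compact convex sets inside `U` form a Vietoris open set `⟨U⟩`, and a
point `y ∈ Y` lies in `f(U ∩ X)` exactly when `{y} ∈ cc(f)(⟨U⟩)`. Hence `f(U ∩ X)` is the preimage
of the open set `cc(f)(⟨U⟩)` under the singleton map, so it is relatively open in `Y`.
-/

namespace CCIn

open Topology

variable {E : Type*} [AddCommGroup E] [Module ℝ E] [TopologicalSpace E] {X : Set E}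

def singleton (x : X) : CCIn E X :=
  ⟨{(x : E)}, Set.singleton_nonempty _, isCompact_singleton, convex_singleton _,
    Set.singleton_subset_iff.2 x.2⟩

@[simp]
theorem coe_singleton (x : X) : (singleton x : Set E) = {(x : E)} := rfl

theorem isOpen_setOf_subset {U : Set E} (hU : IsOpen U) :
    IsOpen[vietorisCC E X] {A : CCIn E X | (A : Set E) ⊆ U} :=
  TopologicalSpace.GenerateOpen.basic _ (Or.inl ⟨U, hU, rfl⟩)

theorem continuous_singleton : Continuous[_, vietorisCC E X] (singleton : X → CCIn E X) := by
  rw [vietorisCC, continuous_generateFrom_iff]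
  rintro s (⟨U, hU, rfl⟩ | ⟨U, hU, rfl⟩)
  · have hpre : singleton ⁻¹' {A : CCIn E X | (A : Set E) ⊆ U} = Subtype.val ⁻¹' U := by
      ext x; simp
    exact hpre ▸ hU.preimage continuous_subtype_val
  · have hpre : singleton ⁻¹' {A : CCIn E X | ((A : Set E) ∩ U).Nonempty} =
        Subtype.val ⁻¹' U := by
      ext x; simp [Set.singleton_inter_nonempty]
    exact hpre ▸ hU.preimage continuous_subtype_val

variable {F : Type*} [AddCommGroup F] [Module ℝ F] [TopologicalSpace F] {Y : Set F}

theorem preimage_singleton_image_setOf_subset {f : E → F} {g : CCIn E X → CCIn F Y}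
    (hg : ∀ A : CCIn E X, (g A : Set F) = f '' (A : Set E)) (U : Set E) :
    singleton ⁻¹' (g '' {A : CCIn E X | (A : Set E) ⊆ U}) = Subtype.val ⁻¹' (f '' (U ∩ X)) := by
  ext y
  constructor
  · rintro ⟨A, hAU, hAy⟩
    obtain ⟨x, hxA⟩ := A.2.1
    have hfx : f x ∈ ({(y : F)} : Set F) := by
      rw [← coe_singleton, ← hAy, hg]
      exact Set.mem_image_of_mem f hxA
    exact ⟨x, ⟨hAU hxA, A.2.2.2.2 hxA⟩, hfx⟩
  · rintro ⟨x, ⟨hxU, hxX⟩, hfx⟩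
    refine ⟨singleton ⟨x, hxX⟩, by simpa using hxU, Subtype.ext ?_⟩
    simp [hg, hfx]

end CCIn

theorem cc_open_implies_open_general
    (E F : Type*) [AddCommGroup E] [Module ℝ E] [TopologicalSpace E]
    [AddCommGroup F] [Module ℝ F] [TopologicalSpace F]
    (X : Set E) (Y : Set F)
    (f : E → F) (hmaps : Set.MapsTo f X Y)
    (g : CCIn E X → CCIn F Y) (hg : ∀ A : CCIn E X, (g A : Set F) = f '' (A : Set E))
    (hgopen : @IsOpenMap (CCIn E X) (CCIn F Y) (vietorisCC E X) (vietorisCC F Y) g) :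
    ∀ U : Set E, IsOpen U → ∃ V : Set F, IsOpen V ∧ f '' (U ∩ X) = V ∩ Y := by
  intro U hU
  have hopen : IsOpen (Subtype.val ⁻¹' (f '' (U ∩ X)) : Set Y) := by
    rw [← CCIn.preimage_singleton_image_setOf_subset hg U]
    exact @IsOpen.preimage _ _ _ (vietorisCC F Y) _ CCIn.continuous_singleton _
      (hgopen _ (CCIn.isOpen_setOf_subset hU))
  obtain ⟨V, hV, hVeq⟩ := isOpen_induced_iff.1 hopen
  have himage_sub : f '' (U ∩ X) ⊆ Y := (hmaps.mono_left Set.inter_subset_right).image_subset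
  refine ⟨V, hV, ?_⟩
  rw [Subtype.preimage_val_eq_preimage_val_iff] at hVeq
  rw [Set.inter_comm V, hVeq, Set.inter_eq_right.2 himage_sub]

/-- If `f : X → Y` is a continuous affine map of compact convex
subsets of Hausdorff locally convex spaces and the induced map
`cc(f) : cc(X) → cc(Y)` is open (Vietoris topologies), then `f` itself is open
(as a map from `X` onto its image in `Y`). -/
theorem cc_open_implies_open
    (E F : Type*) [AddCommGroup E] [Module ℝ E] [TopologicalSpace E]
    [IsTopologicalAddGroup E] [ContinuousSMul ℝ E] [T2Space E] [LocallyConvexSpace ℝ E]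
    [AddCommGroup F] [Module ℝ F] [TopologicalSpace F]
    [IsTopologicalAddGroup F] [ContinuousSMul ℝ F] [T2Space F] [LocallyConvexSpace ℝ F]
    (X : Set E) (Y : Set F) (hX : IsCompact X) (hXv : Convex ℝ X)
    (hY : IsCompact Y) (hYv : Convex ℝ Y)
    (f : E → F) (hcont : ContinuousOn f X) (hmaps : Set.MapsTo f X Y)
    (haff : ∀ x ∈ X, ∀ y ∈ X, ∀ t : ℝ, t ∈ Set.Icc (0:ℝ) 1 →
      f (t • x + (1 - t) • y) = t • f x + (1 - t) • f y)
    (hsurj : f '' X = Y)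
    (g : CCIn E X → CCIn F Y) (hg : ∀ A : CCIn E X, (g A : Set F) = f '' (A : Set E))
    (hgopen : @IsOpenMap (CCIn E X) (CCIn F Y) (vietorisCC E X) (vietorisCC F Y) g) :
    ∀ U : Set E, IsOpen U → ∃ V : Set F, IsOpen V ∧ f '' (U ∩ X) = V ∩ Y :=
  cc_open_implies_open_general E F X Y f hmaps g hg hgopen
end

section
/- If f : X → Y is a surjective open continuous map between compact Hausdorff spaces, then the induced map exp(f) : exp(X) → exp(Y), A ↦ f(A), between hyperspaces with the Vietoris topology, is open. -/
/-!
The finite intersections `⟨U; V₁, …, Vₙ⟩ = {A | A ⊆ U, A ∩ Vᵢ ≠ ∅}` (`Hyper.basic U {V₁, …, Vₙ}`)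
of subbasic sets form a basis of the Vietoris topology, and the image of `⟨U; V₁, …, Vₙ⟩` under `exp f` is exactly the basic open set
`⟨f U; f (V₁ ∩ U), …, f (Vₙ ∩ U)⟩`. The nontrivial inclusion lifts a compact `C ⊆ f U` to a compact
`A ⊆ U` with `f A = C`: since `f` is open and `X` is locally compact, finitely many compact
neighbourhoods of preimage points in `U` have images covering `C`; their union, enlarged by one
preimage point in each `Vᵢ ∩ U` and intersected with `f⁻¹ C`, is the required `A`.
-/

/-- The hyperspace of nonempty compact subsets of `X`. -/
abbrev Hyper (X : Type*) [TopologicalSpace X] : Type _ :=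
  {A : Set X // A.Nonempty ∧ IsCompact A}

/-- The Vietoris topology on `Hyper X`. -/
def vietoris (X : Type*) [TopologicalSpace X] : TopologicalSpace (Hyper X) :=
  TopologicalSpace.generateFrom
    ({S | ∃ U : Set X, IsOpen U ∧ S = {A : Hyper X | (A : Set X) ⊆ U}} ∪
     {S | ∃ U : Set X, IsOpen U ∧ S = {A : Hyper X | ((A : Set X) ∩ U).Nonempty}})

open Set Topology

attribute [local instance] vietoris

theorem IsOpenMap.exists_isCompact_subset_image {X Y : Type*} [TopologicalSpace X]
    [LocallyCompactSpace X] [TopologicalSpace Y] {f : X → Y} (hopen : IsOpenMap f)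
    {U : Set X} (hU : IsOpen U) {B : Set Y} (hB : IsCompact B) (hBU : B ⊆ f '' U) :
    ∃ K, IsCompact K ∧ K ⊆ U ∧ B ⊆ f '' K := by
  have hnhds : ∀ y ∈ B, ∃ L, IsCompact L ∧ L ⊆ U ∧ f '' L ∈ 𝓝 y := by
    rintro y hy
    obtain ⟨x, hxU, rfl⟩ := hBU hy
    obtain ⟨L, hLx, hLU, hLc⟩ := LocallyCompactSpace.local_compact_nhds x U (hU.mem_nhds hxU)
    exact ⟨L, hLc, hLU, hopen.image_mem_nhds hLx⟩
  choose! L hLc hLU hLy using hnhds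
  obtain ⟨t, htB, hBt⟩ := hB.elim_nhds_subcover (fun y => f '' L y) hLy
  refine ⟨⋃ y ∈ t, L y, t.isCompact_biUnion fun y hy => hLc y (htB y hy),
    iUnion₂_subset fun y hy => hLU y (htB y hy), ?_⟩
  rwa [image_iUnion₂]

namespace Hyper

variable {X Y : Type*} [TopologicalSpace X] [TopologicalSpace Y]

def basic (U : Set X) (𝒱 : Set (Set X)) : Set (Hyper X) :=
  {A | (A : Set X) ⊆ U ∧ ∀ V ∈ 𝒱, ((A : Set X) ∩ V).Nonempty}

variable (X) in
def basis : Set (Set (Hyper X)) :=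
  {S | ∃ U 𝒱, IsOpen U ∧ 𝒱.Finite ∧ (∀ V ∈ 𝒱, IsOpen V) ∧ basic U 𝒱 = S}

theorem basic_inter_basic (U₁ U₂ : Set X) (𝒱₁ 𝒱₂ : Set (Set X)) :
    basic U₁ 𝒱₁ ∩ basic U₂ 𝒱₂ = basic (U₁ ∩ U₂) (𝒱₁ ∪ 𝒱₂) := by
  ext A
  simp only [basic, mem_inter_iff, mem_ofPred_eq, subset_inter_iff, mem_union, or_imp, forall_and]
  tauto

theorem isOpen_basic {U : Set X} (hU : IsOpen U) {𝒱 : Set (Set X)} (h𝒱 : 𝒱.Finite)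
    (h𝒱o : ∀ V ∈ 𝒱, IsOpen V) : IsOpen (basic U 𝒱) := by
  have hbasic : basic U 𝒱 =
      {A : Hyper X | (A : Set X) ⊆ U} ∩ ⋂ V ∈ 𝒱, {A : Hyper X | ((A : Set X) ∩ V).Nonempty} := by
    ext A
    simp [basic]
  rw [hbasic]
  exact (TopologicalSpace.isOpen_generateFrom_of_mem (Or.inl ⟨U, hU, rfl⟩)).inter
    (h𝒱.isOpen_biInter fun V hV =>
      TopologicalSpace.isOpen_generateFrom_of_mem (Or.inr ⟨V, h𝒱o V hV, rfl⟩))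

theorem exists_mem_basis_mem_subset {O : Set (Hyper X)} (hO : IsOpen O) {A : Hyper X}
    (hA : A ∈ O) : ∃ S ∈ basis X, A ∈ S ∧ S ⊆ O := by
  induction hO generalizing A with
  | basic s hs =>
    refine ⟨s, ?_, hA, subset_rfl⟩
    rcases hs with ⟨U, hU, rfl⟩ | ⟨V, hV, rfl⟩
    · exact ⟨U, ∅, hU, finite_empty, by simp, by simp [basic]⟩
    · exact ⟨univ, {V}, isOpen_univ, finite_singleton V, by simpa using hV, by simp [basic]⟩
  | univ => exact ⟨univ, ⟨univ, ∅, isOpen_univ, finite_empty, by simp, by simp [basic]⟩, trivial,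
      subset_rfl⟩
  | inter s t _ _ ihs iht =>
    obtain ⟨-, ⟨U₁, 𝒱₁, hU₁, h𝒱₁, h𝒱₁o, rfl⟩, hA₁, hs⟩ := ihs hA.1
    obtain ⟨-, ⟨U₂, 𝒱₂, hU₂, h𝒱₂, h𝒱₂o, rfl⟩, hA₂, ht⟩ := iht hA.2
    refine ⟨_, ⟨U₁ ∩ U₂, 𝒱₁ ∪ 𝒱₂, hU₁.inter hU₂, h𝒱₁.union h𝒱₂, ?_, rfl⟩,
      basic_inter_basic U₁ U₂ 𝒱₁ 𝒱₂ ▸ ⟨hA₁, hA₂⟩,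
      basic_inter_basic U₁ U₂ 𝒱₁ 𝒱₂ ▸ inter_subset_inter hs ht⟩
    rintro V (hV | hV)
    exacts [h𝒱₁o V hV, h𝒱₂o V hV]
  | sUnion S _ ih =>
    obtain ⟨s, hs, hAs⟩ := hA
    obtain ⟨b, hb, hAb, hbs⟩ := ih s hs hAs
    exact ⟨b, hb, hAb, hbs.trans (subset_sUnion_of_mem hs)⟩

theorem isTopologicalBasis_basis : TopologicalSpace.IsTopologicalBasis (basis X) :=
  TopologicalSpace.isTopologicalBasis_of_isOpen_of_nhds
    (fun _ ⟨_, _, hU, h𝒱, h𝒱o, hS⟩ => hS ▸ isOpen_basic hU h𝒱 h𝒱o)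
    (fun _ _ hA hO => exists_mem_basis_mem_subset hO hA)

def map (f : X → Y) (hf : Continuous f) (A : Hyper X) : Hyper Y :=
  ⟨f '' (A : Set X), A.2.1.image f, A.2.2.image hf⟩

theorem map_image_basic [LocallyCompactSpace X] [T2Space Y] {f : X → Y} (hf : Continuous f)
    (hopen : IsOpenMap f) {U : Set X} (hU : IsOpen U) {𝒱 : Set (Set X)} (h𝒱 : 𝒱.Finite) :
    map f hf '' basic U 𝒱 = basic (f '' U) ((fun V => f '' (V ∩ U)) '' 𝒱) := by
  refine subset_antisymm ?_ fun C ⟨hCU, hC𝒱⟩ => ?_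
  · rintro _ ⟨A, ⟨hAU, hA𝒱⟩, rfl⟩
    refine ⟨image_mono hAU, forall_mem_image.2 fun V hV => ?_⟩
    obtain ⟨x, hxA, hxV⟩ := hA𝒱 V hV
    exact ⟨f x, mem_image_of_mem f hxA, mem_image_of_mem f ⟨hxV, hAU hxA⟩⟩
  have hpt : ∀ V : 𝒱, ∃ x ∈ (V : Set X) ∩ U, f x ∈ (C : Set Y) := fun V => by
    obtain ⟨-, hyC, x, hx, rfl⟩ := hC𝒱 _ (mem_image_of_mem _ V.2)
    exact ⟨x, hx, hyC⟩
  choose pt hptV hptC using hpt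
  obtain ⟨K, hKc, hKU, hCK⟩ := hopen.exists_isCompact_subset_image hU C.2.2 hCU
  have : Finite 𝒱 := h𝒱.to_subtype
  let A : Set X := (K ∪ range pt) ∩ f ⁻¹' C
  have hAC : f '' A = C := by
    rw [image_inter_preimage, inter_eq_right]
    exact hCK.trans (image_mono subset_union_left)
  have hAc : IsCompact A :=
    (hKc.union (finite_range pt).isCompact).inter_right (C.2.2.isClosed.preimage hf)
  refine ⟨⟨A, image_nonempty.1 (hAC ▸ C.2.1), hAc⟩, ⟨?_, fun V hV => ?_⟩, Subtype.ext hAC⟩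
  · rintro x ⟨hxK | ⟨V, rfl⟩, -⟩
    exacts [hKU hxK, (hptV V).2]
  · exact ⟨pt ⟨V, hV⟩, ⟨Or.inr (mem_range_self _), hptC _⟩, (hptV ⟨V, hV⟩).1⟩

end Hyper

theorem exp_map_isOpenMap_general
    (X Y : Type*) [TopologicalSpace X] [CompactSpace X] [T2Space X]
    [TopologicalSpace Y] [T2Space Y]
    (f : X → Y) (hf : Continuous f)
    (hopen : IsOpenMap f) :
    @IsOpenMap (Hyper X) (Hyper Y) (vietoris X) (vietoris Y)
      (fun A => ⟨f '' (A : Set X), A.2.1.image f, A.2.2.image hf⟩) := by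
  show IsOpenMap (Hyper.map f hf)
  refine Hyper.isTopologicalBasis_basis.isOpenMap_iff.2 ?_
  rintro _ ⟨U, 𝒱, hU, h𝒱, h𝒱o, rfl⟩
  rw [Hyper.map_image_basic hf hopen hU h𝒱]
  exact Hyper.isOpen_basic (hopen _ hU) (h𝒱.image _) (forall_mem_image.2 fun V hV =>
    hopen _ ((h𝒱o V hV).inter hU))

/-- If `f : X → Y` is a surjective open continuous map between
compact Hausdorff spaces, then the induced map `exp(f) : exp(X) → exp(Y)`,
`A ↦ f '' A`, is open with respect to the Vietoris topologies. -/
theorem exp_map_isOpenMap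
    (X Y : Type*) [TopologicalSpace X] [CompactSpace X] [T2Space X]
    [TopologicalSpace Y] [CompactSpace Y] [T2Space Y]
    (f : X → Y) (hf : Continuous f) (hsurj : Function.Surjective f)
    (hopen : IsOpenMap f) :
    @IsOpenMap (Hyper X) (Hyper Y) (vietoris X) (vietoris Y)
      (fun A => ⟨f '' (A : Set X), A.2.1.image f, A.2.2.image hf⟩) :=
  exp_map_isOpenMap_general X Y f hf hopen
end

section
/- Let f : X → Y be a surjective continuous affine open map of compact convex subsets of Hausdorff locally convex spaces. Then the induced map cc(f) : cc(X) → cc(Y) on hyperspaces of nonempty compact convex subsets with the Vietoris topology is open. -/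
open Set Pointwise Topology TopologicalSpace

section Vietoris

variable {E : Type*} [AddCommGroup E] [Module ℝ E] [TopologicalSpace E]

def vietorisNbhd (X U : Set E) (𝒱 : Set (Set E)) : Set (CCIn E X) :=
  {A | (A : Set E) ⊆ U ∧ ∀ V ∈ 𝒱, ((A : Set E) ∩ V).Nonempty}

def vietorisBasis (X : Set E) : Set (Set (CCIn E X)) :=
  {S | ∃ U 𝒱, IsOpen U ∧ 𝒱.Finite ∧ (∀ V ∈ 𝒱, IsOpen V) ∧ S = vietorisNbhd X U 𝒱}

theorem vietorisNbhd_inter (X U U' : Set E) (𝒱 𝒱' : Set (Set E)) :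
    vietorisNbhd X U 𝒱 ∩ vietorisNbhd X U' 𝒱' = vietorisNbhd X (U ∩ U') (𝒱 ∪ 𝒱') := by
  ext A
  simp only [vietorisNbhd, mem_inter_iff, mem_ofPred_eq, subset_inter_iff, mem_union,
    or_imp, forall_and]
  tauto

theorem isOpen_vietorisNbhd {X U : Set E} {𝒱 : Set (Set E)} (hU : IsOpen U) (h𝒱 : 𝒱.Finite)
    (h𝒱o : ∀ V ∈ 𝒱, IsOpen V) : IsOpen[vietorisCC E X] (vietorisNbhd X U 𝒱) := by
  let := vietorisCC E X
  have hsplit : vietorisNbhd X U 𝒱 =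
      {A : CCIn E X | (A : Set E) ⊆ U} ∩ ⋂ V ∈ 𝒱, {A : CCIn E X | ((A : Set E) ∩ V).Nonempty} := by
    ext A
    simp [vietorisNbhd]
  rw [hsplit]
  exact (isOpen_generateFrom_of_mem (Or.inl ⟨U, hU, rfl⟩)).inter <|
    h𝒱.isOpen_biInter fun V hV => isOpen_generateFrom_of_mem (Or.inr ⟨V, h𝒱o V hV, rfl⟩)

theorem vietorisCC_eq_generateFrom_vietorisBasis (X : Set E) :
    vietorisCC E X = generateFrom (vietorisBasis X) := by
  refine le_antisymm (le_generateFrom fun S ⟨U, 𝒱, hU, h𝒱, h𝒱o, hS⟩ => ?_)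
    (le_generateFrom ?_)
  · exact hS ▸ isOpen_vietorisNbhd hU h𝒱 h𝒱o
  · rintro S (⟨U, hU, rfl⟩ | ⟨U, hU, rfl⟩)
    · exact isOpen_generateFrom_of_mem ⟨U, ∅, hU, finite_empty, by simp, by simp [vietorisNbhd]⟩
    · exact isOpen_generateFrom_of_mem
        ⟨univ, {U}, isOpen_univ, finite_singleton U, by simpa, by simp [vietorisNbhd]⟩

theorem isTopologicalBasis_vietorisBasis (X : Set E) :
    @IsTopologicalBasis _ (vietorisCC E X) (vietorisBasis X) := by
  let := vietorisCC E X
  refine isTopologicalBasis_of_subbasis_of_finiteInter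
    (vietorisCC_eq_generateFrom_vietorisBasis X) ⟨?_, ?_⟩
  · exact ⟨univ, ∅, isOpen_univ, finite_empty, by simp, by simp [vietorisNbhd]⟩
  · rintro _ ⟨U, 𝒱, hU, h𝒱, h𝒱o, rfl⟩ _ ⟨U', 𝒱', hU', h𝒱', h𝒱o', rfl⟩
    refine ⟨U ∩ U', 𝒱 ∪ 𝒱', hU.inter hU', h𝒱.union h𝒱', ?_, vietorisNbhd_inter ..⟩
    rintro V (hV | hV)
    exacts [h𝒱o V hV, h𝒱o' V hV]

end Vietoris

theorem exists_isOpen_convex_closure_subset {E : Type*} [AddCommGroup E] [Module ℝ E]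
    [TopologicalSpace E] [IsTopologicalAddGroup E] [ContinuousConstSMul ℝ E]
    [LocallyConvexSpace ℝ E] {A U : Set E} (hA : IsCompact A) (hAv : Convex ℝ A)
    (hU : IsOpen U) (hAU : A ⊆ U) :
    ∃ O : Set E, IsOpen O ∧ Convex ℝ O ∧ A ⊆ O ∧ closure O ⊆ U := by
  obtain ⟨V, hV, hAVU⟩ := compact_open_separated_add_right hA hU hAU
  obtain ⟨W, hW, hWc, hWV⟩ := exists_mem_nhds_isClosed_subset hV
  obtain ⟨S, hS, hSv, hSW⟩ :=
    (locallyConvexSpace_iff_exists_convex_subset_zero ℝ E).mp inferInstance W hW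
  refine ⟨A + interior S, isOpen_interior.add_left, hAv.add hSv.interior,
    subset_add_left A (mem_interior_iff_mem_nhds.mpr hS), ?_⟩
  calc closure (A + interior S) ⊆ A + W :=
        closure_minimal (add_subset_add_left (interior_subset.trans hSW))
          (hWc.add_left_of_isCompact hA)
    _ ⊆ A + V := add_subset_add_left hWV
    _ ⊆ U := hAVU

def AffineOn {E F : Type*} [AddCommGroup E] [Module ℝ E] [AddCommGroup F] [Module ℝ F]
    (f : E → F) (X : Set E) : Prop :=
  ∀ x ∈ X, ∀ y ∈ X, ∀ t : ℝ, t ∈ Icc (0:ℝ) 1 → f (t • x + (1 - t) • y) = t • f x + (1 - t) • f y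

namespace AffineOn

variable {E F : Type*} [AddCommGroup E] [Module ℝ E] [AddCommGroup F] [Module ℝ F]
  {f : E → F} {X : Set E}

theorem map_smul_add_smul (hf : AffineOn f X) {x y : E} (hx : x ∈ X) (hy : y ∈ X) {a b : ℝ}
    (ha : 0 ≤ a) (hb : 0 ≤ b) (hab : a + b = 1) : f (a • x + b • y) = a • f x + b • f y := by
  obtain rfl : b = 1 - a := by linarith
  exact hf x hx y hy a ⟨ha, by linarith⟩

theorem convex_image (hf : AffineOn f X) {A : Set E} (hA : Convex ℝ A) (hAX : A ⊆ X) :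
    Convex ℝ (f '' A) := by
  rintro _ ⟨x, hx, rfl⟩ _ ⟨y, hy, rfl⟩ a b ha hb hab
  exact ⟨a • x + b • y, hA hx hy ha hb hab, hf.map_smul_add_smul (hAX hx) (hAX hy) ha hb hab⟩

theorem convex_inter_preimage (hf : AffineOn f X) (hX : Convex ℝ X) {D : Set F}
    (hD : Convex ℝ D) : Convex ℝ (X ∩ f ⁻¹' D) := by
  rintro x ⟨hxX, hxD⟩ y ⟨hyX, hyD⟩ a b ha hb hab
  refine ⟨hX hxX hyX ha hb hab, ?_⟩
  rw [mem_preimage, hf.map_smul_add_smul hxX hyX ha hb hab]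
  exact hD hxD hyD ha hb hab

variable [TopologicalSpace E] [TopologicalSpace F] {Y : Set F}

theorem image_closure_convexHull_inter_preimage (hf : AffineOn f X) (hXc : IsClosed X)
    (hXv : Convex ℝ X) (hfc : ContinuousOn f X) {S : Set E} (hSX : S ⊆ X) {D : Set F}
    (hDc : IsClosed D) (hDv : Convex ℝ D) (hDS : D ⊆ f '' S) :
    f '' closure (convexHull ℝ (S ∩ f ⁻¹' D)) = D := by
  have hhull : convexHull ℝ (S ∩ f ⁻¹' D) ⊆ X ∩ f ⁻¹' D :=
    convexHull_min (inter_subset_inter_left _ hSX) (hf.convex_inter_preimage hXv hDv)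
  have hclosure : closure (convexHull ℝ (S ∩ f ⁻¹' D)) ⊆ X :=
    closure_minimal (hhull.trans inter_subset_left) hXc
  apply Subset.antisymm
  · calc f '' closure (convexHull ℝ (S ∩ f ⁻¹' D))
        ⊆ closure (f '' convexHull ℝ (S ∩ f ⁻¹' D)) := (hfc.mono hclosure).image_closure
      _ ⊆ closure D := closure_mono (image_subset_iff.2 (hhull.trans inter_subset_right))
      _ = D := hDc.closure_eq
  · calc D ⊆ f '' (S ∩ f ⁻¹' D) := by rw [image_inter_preimage]; exact subset_inter hDS le_rfl
      _ ⊆ f '' closure (convexHull ℝ (S ∩ f ⁻¹' D)) :=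
        image_mono ((subset_convexHull ℝ _).trans subset_closure)

def ccMap (hf : AffineOn f X) (hfc : ContinuousOn f X) (hXY : MapsTo f X Y) (A : CCIn E X) :
    CCIn F Y :=
  ⟨f '' A, A.2.1.image f, A.2.2.1.image_of_continuousOn (hfc.mono A.2.2.2.2),
    hf.convex_image A.2.2.2.1 A.2.2.2.2, hXY.mono_left A.2.2.2.2 |>.image_subset⟩

theorem exists_ccIn_image_eq [IsTopologicalAddGroup E] [ContinuousConstSMul ℝ E] [T2Space E]
    [T2Space F] (hf : AffineOn f X) (hX : IsCompact X)
    (hXv : Convex ℝ X) (hfc : ContinuousOn f X) {O : Set E} (hOv : Convex ℝ O) (D : CCIn F Y)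
    (hDO : (D : Set F) ⊆ f '' (O ∩ X)) :
    ∃ B : CCIn E X, f '' B = D ∧ (B : Set E) ⊆ closure O ∧ O ∩ X ∩ f ⁻¹' D ⊆ B := by
  have hhull : convexHull ℝ (O ∩ X ∩ f ⁻¹' D) ⊆ O ∩ X :=
    convexHull_min inter_subset_left (hOv.inter hXv)
  have hBX : closure (convexHull ℝ (O ∩ X ∩ f ⁻¹' D)) ⊆ X :=
    closure_minimal (hhull.trans inter_subset_right) hX.isClosed
  have himage := hf.image_closure_convexHull_inter_preimage hX.isClosed hXv hfc
    inter_subset_right D.2.2.1.isClosed D.2.2.2.1 hDO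
  refine ⟨⟨_, image_nonempty.mp (himage ▸ D.2.1), hX.of_isClosed_subset isClosed_closure hBX,
    (convex_convexHull ℝ _).closure, hBX⟩, himage, closure_mono (hhull.trans inter_subset_left),
    (subset_convexHull ℝ _).trans subset_closure⟩

theorem isOpen_ccMap_image_vietorisNbhd [IsTopologicalAddGroup E] [ContinuousConstSMul ℝ E]
    [LocallyConvexSpace ℝ E] [T2Space E] [T2Space F] (hf : AffineOn f X) (hX : IsCompact X)
    (hXv : Convex ℝ X) (hfc : ContinuousOn f X) (hXY : MapsTo f X Y)
    (hopen : ∀ U : Set E, IsOpen U → ∃ V : Set F, IsOpen V ∧ f '' (U ∩ X) = V ∩ Y)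
    {U : Set E} {𝒱 : Set (Set E)} (hU : IsOpen U) (h𝒱 : 𝒱.Finite) (h𝒱o : ∀ V ∈ 𝒱, IsOpen V) :
    IsOpen[vietorisCC F Y] (hf.ccMap hfc hXY '' vietorisNbhd X U 𝒱) := by
  let := vietorisCC F Y
  rw [isOpen_iff_forall_mem_open]
  rintro _ ⟨A, ⟨hAU, hA𝒱⟩, rfl⟩
  obtain ⟨O, hO, hOv, hAO, hOU⟩ :=
    exists_isOpen_convex_closure_subset A.2.2.1 A.2.2.2.1 hU hAU
  choose! φ hφo hφ using hopen
  have hVO : ∀ V ∈ 𝒱, IsOpen (V ∩ O) := fun V hV => (h𝒱o V hV).inter hO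
  refine ⟨vietorisNbhd Y (φ O) ((fun V => φ (V ∩ O)) '' 𝒱), ?_,
    isOpen_vietorisNbhd (hφo O hO) (h𝒱.image _)
      (forall_mem_image.2 fun V hV => hφo _ (hVO V hV)), ?_⟩
  · rintro D ⟨hDO, hD𝒱⟩
    have hDO' : (D : Set F) ⊆ f '' (O ∩ X) := by
      rw [hφ O hO]
      exact subset_inter hDO D.2.2.2.2
    obtain ⟨B, hBD, hBO, hB⟩ := hf.exists_ccIn_image_eq hX hXv hfc hOv D hDO'
    refine ⟨B, ⟨hBO.trans hOU, fun V hV => ?_⟩, Subtype.ext hBD⟩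
    obtain ⟨d, hdD, hdV⟩ := hD𝒱 _ (mem_image_of_mem _ hV)
    obtain ⟨x, ⟨⟨hxV, hxO⟩, hxX⟩, rfl⟩ : d ∈ f '' (V ∩ O ∩ X) := by
      rw [hφ _ (hVO V hV)]
      exact ⟨hdV, D.2.2.2.2 hdD⟩
    exact ⟨x, hB ⟨⟨hxO, hxX⟩, hdD⟩, hxV⟩
  · refine ⟨?_, forall_mem_image.2 fun V hV => ?_⟩
    · have : f '' A ⊆ φ O ∩ Y := by
        rw [← hφ O hO]
        exact image_mono (subset_inter hAO A.2.2.2.2)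
      exact this.trans inter_subset_left
    · obtain ⟨a, haA, haV⟩ := hA𝒱 V hV
      have : f a ∈ φ (V ∩ O) ∩ Y := by
        rw [← hφ _ (hVO V hV)]
        exact mem_image_of_mem f ⟨⟨haV, hAO haA⟩, A.2.2.2.2 haA⟩
      exact ⟨f a, mem_image_of_mem f haA, this.1⟩

end AffineOn

theorem cc_map_isOpenMap_general
    (E F : Type*) [AddCommGroup E] [Module ℝ E] [TopologicalSpace E]
    [IsTopologicalAddGroup E] [ContinuousSMul ℝ E] [T2Space E] [LocallyConvexSpace ℝ E]
    [AddCommGroup F] [Module ℝ F] [TopologicalSpace F]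
    [T2Space F]
    (X : Set E) (Y : Set F) (hX : IsCompact X) (hXv : Convex ℝ X)
    (f : E → F) (hcont : ContinuousOn f X) (hmaps : Set.MapsTo f X Y)
    (haff : ∀ x ∈ X, ∀ y ∈ X, ∀ t : ℝ, t ∈ Set.Icc (0:ℝ) 1 →
      f (t • x + (1 - t) • y) = t • f x + (1 - t) • f y)
    (hopen : ∀ U : Set E, IsOpen U → ∃ V : Set F, IsOpen V ∧ f '' (U ∩ X) = V ∩ Y) :
    ∃ g : CCIn E X → CCIn F Y,
      (∀ A : CCIn E X, (g A : Set F) = f '' (A : Set E)) ∧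
      @IsOpenMap (CCIn E X) (CCIn F Y) (vietorisCC E X) (vietorisCC F Y) g := by
  have hf : AffineOn f X := haff
  let := vietorisCC E X
  let := vietorisCC F Y
  refine ⟨hf.ccMap hcont hmaps, fun _ => rfl, ?_⟩
  refine (isTopologicalBasis_vietorisBasis X).isOpenMap_iff.2 ?_
  rintro _ ⟨U, 𝒱, hU, h𝒱, h𝒱o, rfl⟩
  exact hf.isOpen_ccMap_image_vietorisNbhd hX hXv hcont hmaps hopen hU h𝒱 h𝒱o

/-- If `f : X → Y` is a surjective continuous affine open map of
compact convex subsets of Hausdorff locally convex spaces, then the induced map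
`cc(f) : cc(X) → cc(Y)` is open with respect to the Vietoris topologies. -/
theorem cc_map_isOpenMap
    (E F : Type*) [AddCommGroup E] [Module ℝ E] [TopologicalSpace E]
    [IsTopologicalAddGroup E] [ContinuousSMul ℝ E] [T2Space E] [LocallyConvexSpace ℝ E]
    [AddCommGroup F] [Module ℝ F] [TopologicalSpace F]
    [IsTopologicalAddGroup F] [ContinuousSMul ℝ F] [T2Space F] [LocallyConvexSpace ℝ F]
    (X : Set E) (Y : Set F) (hX : IsCompact X) (hXv : Convex ℝ X)
    (hY : IsCompact Y) (hYv : Convex ℝ Y)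
    (f : E → F) (hcont : ContinuousOn f X) (hmaps : Set.MapsTo f X Y)
    (haff : ∀ x ∈ X, ∀ y ∈ X, ∀ t : ℝ, t ∈ Set.Icc (0:ℝ) 1 →
      f (t • x + (1 - t) • y) = t • f x + (1 - t) • f y)
    (hsurj : f '' X = Y)
    (hopen : ∀ U : Set E, IsOpen U → ∃ V : Set F, IsOpen V ∧ f '' (U ∩ X) = V ∩ Y) :
    ∃ g : CCIn E X → CCIn F Y,
      (∀ A : CCIn E X, (g A : Set F) = f '' (A : Set E)) ∧
      @IsOpenMap (CCIn E X) (CCIn F Y) (vietorisCC E X) (vietorisCC F Y) g :=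
  cc_map_isOpenMap_general E F X Y hX hXv f hcont hmaps haff hopen
end

section
/- Let X ⊆ ℓ² be a compact convex set, and let ξ(x, A) denote the nearest point of a nonempty closed convex subset A ⊆ X to a point x ∈ X. Then ξ : X × cc(X) → X is continuous, where cc(X) carries the Hausdorff metric topology. -/
open TopologicalSpace Metric Filter Topology

noncomputable abbrev ellTwo : Type := lp (fun _ : ℕ => ℝ) 2

lemma nearest_unique' {K : Set ellTwo} (hc : Convex ℝ K) {x v w : ellTwo}
    (hv : v ∈ K) (hw : w ∈ K)
    (hvm : ∀ z ∈ K, ‖v - x‖ ≤ ‖z - x‖) (hwm : ∀ z ∈ K, ‖w - x‖ ≤ ‖z - x‖) :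
    v = w := by
  have hm : (1/2 : ℝ) • v + (1/2 : ℝ) • w ∈ K :=
    hc hv hw (by norm_num) (by norm_num) (by norm_num)
  set m := (1/2 : ℝ) • v + (1/2 : ℝ) • w with hmdef
  have h1 : ‖v - x‖ ≤ ‖m - x‖ := hvm m hm
  have h2 : ‖w - x‖ ≤ ‖v - x‖ := hwm v hv
  have hpar := parallelogram_law_with_norm ℝ (v - x) (w - x)
  have hsum : (v - x) + (w - x) = (2 : ℝ) • (m - x) := by
    rw [hmdef]; module
  have hdiff : (v - x) - (w - x) = v - w := by abel
  rw [hsum, hdiff, norm_smul] at hpar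
  simp only [Real.norm_ofNat] at hpar
  have h4 : ‖w - x‖ ≤ ‖m - x‖ := h2.trans h1
  have e1 : ‖v - x‖ * ‖v - x‖ ≤ ‖m - x‖ * ‖m - x‖ :=
    mul_le_mul h1 h1 (norm_nonneg _) (norm_nonneg _)
  have e2 : ‖w - x‖ * ‖w - x‖ ≤ ‖m - x‖ * ‖m - x‖ :=
    mul_le_mul h4 h4 (norm_nonneg _) (norm_nonneg _)
  have hz : ‖v - w‖ = 0 := by nlinarith [norm_nonneg (v - w)]
  exact sub_eq_zero.mp (norm_eq_zero.mp hz)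

set_option synthInstance.maxHeartbeats 1000000 in
set_option maxHeartbeats 1000000 in
/-- Let `X ⊆ ℓ²` be a compact convex set. The nearest point map
`ξ : X × cc(X) → X`, where `ξ(x, A)` is the unique nearest point of `A` to `x`
(characterized by `‖z − x‖ > ‖ξ(x,A) − x‖` for `z ∈ A`, `z ≠ ξ(x,A)`), is
continuous, where `cc(X)` (the nonempty compact convex subsets of `X`) carries the
Hausdorff metric topology. -/
theorem nearest_point_map_continuous
    (X : Set ellTwo) (hX : IsCompact X) (hXv : Convex ℝ X) :
    ∃ ξ : ↥X × {K : NonemptyCompacts ellTwo // Convex ℝ (K : Set ellTwo) ∧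
          (K : Set ellTwo) ⊆ X} → ellTwo,
      (∀ p, ξ p ∈ (p.2.1 : Set ellTwo) ∧
        ∀ z ∈ (p.2.1 : Set ellTwo), z ≠ ξ p →
          ‖ξ p - (p.1 : ellTwo)‖ < ‖z - (p.1 : ellTwo)‖) ∧
      Continuous ξ := by
  classical
  set S := {K : NonemptyCompacts ellTwo // Convex ℝ (K : Set ellTwo) ∧
          (K : Set ellTwo) ⊆ X} with hS
  have hex : ∀ p : ↥X × S, ∃ y, y ∈ (p.2.1 : Set ellTwo) ∧
      ∀ z ∈ (p.2.1 : Set ellTwo), ‖y - (p.1 : ellTwo)‖ ≤ ‖z - (p.1 : ellTwo)‖ := by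
    intro p
    obtain ⟨y, hy, hyd⟩ :=
      p.2.1.isCompact.exists_infDist_eq_dist p.2.1.nonempty (p.1 : ellTwo)
    refine ⟨y, hy, fun z hz => ?_⟩
    have h := infDist_le_dist_of_mem (x := (p.1 : ellTwo)) hz
    rw [hyd] at h
    rw [dist_eq_norm, dist_eq_norm] at h
    rwa [norm_sub_rev (p.1 : ellTwo) y, norm_sub_rev (p.1 : ellTwo) z] at h
  set ξ : ↥X × S → ellTwo := fun p => (hex p).choose with hξ
  have hmem : ∀ p, ξ p ∈ (p.2.1 : Set ellTwo) := fun p => (hex p).choose_spec.1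
  have hmin : ∀ p, ∀ z ∈ (p.2.1 : Set ellTwo),
      ‖ξ p - (p.1 : ellTwo)‖ ≤ ‖z - (p.1 : ellTwo)‖ := fun p => (hex p).choose_spec.2
  have huniq : ∀ (p : ↥X × S) (y : ellTwo), y ∈ (p.2.1 : Set ellTwo) →
      (∀ z ∈ (p.2.1 : Set ellTwo), ‖y - (p.1 : ellTwo)‖ ≤ ‖z - (p.1 : ellTwo)‖) →
      y = ξ p := by
    intro p y hy hym
    exact nearest_unique' p.2.2.1 hy (hmem p) hym (hmin p)
  refine ⟨ξ, fun p => ⟨hmem p, fun z hz hzne => ?_⟩, ?_⟩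
  · rcases lt_or_eq_of_le (hmin p z hz) with h | h
    · exact h
    · exfalso
      apply hzne
      refine huniq p z hz fun w hw => ?_
      rw [← h]; exact hmin p w hw
  · refine continuous_iff_seqContinuous.mpr ?_
    intro u p hu
    refine tendsto_of_subseq_tendsto fun ns hns => ?_
    have hin : ∀ n : ℕ, ξ (u (ns n)) ∈ X := fun n =>
      (u (ns n)).2.2.2 (hmem (u (ns n)))
    obtain ⟨y, hyX, φ, hφ, hconv⟩ := hX.tendsto_subseq hin
    refine ⟨φ, ?_⟩
    set q : ℕ → ↥X × S := fun n => u (ns (φ n)) with hq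
    have hqp : Tendsto q atTop (𝓝 p) := hu.comp (hns.comp hφ.tendsto_atTop)
    have hx : Tendsto (fun n => ((q n).1 : ellTwo)) atTop (𝓝 (p.1 : ellTwo)) :=
      ((continuous_subtype_val.comp continuous_fst).tendsto p).comp hqp
    have hK : Tendsto (fun n => ((q n).2 : NonemptyCompacts ellTwo)) atTop
        (𝓝 (p.2 : NonemptyCompacts ellTwo)) :=
      ((continuous_subtype_val.comp continuous_snd).tendsto p).comp hqp
    have hdist : Tendsto (fun n => dist ((q n).2 : NonemptyCompacts ellTwo)
        (p.2 : NonemptyCompacts ellTwo)) atTop (𝓝 0) :=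
      tendsto_iff_dist_tendsto_zero.mp hK
    have hd : Tendsto (fun n =>
        hausdorffDist (((q n).2.1 : Set ellTwo)) ((p.2.1 : Set ellTwo))) atTop (𝓝 0) := by
      simpa only [NonemptyCompacts.dist_eq] using hdist
    have hne : ∀ n : ℕ, EMetric.hausdorffEdist (((q n).2.1 : Set ellTwo))
        ((p.2.1 : Set ellTwo)) ≠ ⊤ := fun n =>
      hausdorffEdist_ne_top_of_nonempty_of_bounded (q n).2.1.nonempty p.2.1.nonempty
        (q n).2.1.isCompact.isBounded p.2.1.isCompact.isBounded
    -- y ∈ K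
    have hyK : y ∈ (p.2.1 : Set ellTwo) := by
      rw [p.2.1.isCompact.isClosed.mem_iff_infDist_zero p.2.1.nonempty]
      refine le_antisymm ?_ infDist_nonneg
      have hle : ∀ n, infDist y ((p.2.1 : Set ellTwo)) ≤
          hausdorffDist (((q n).2.1 : Set ellTwo)) ((p.2.1 : Set ellTwo)) + dist y (ξ (q n)) := by
        intro n
        calc infDist y ((p.2.1 : Set ellTwo))
            ≤ infDist (ξ (q n)) ((p.2.1 : Set ellTwo)) + dist y (ξ (q n)) :=
              infDist_le_infDist_add_dist
          _ ≤ _ := by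
              gcongr
              exact infDist_le_hausdorffDist_of_mem (hmem (q n)) (hne n)
      have htend : Tendsto (fun n =>
          hausdorffDist (((q n).2.1 : Set ellTwo)) ((p.2.1 : Set ellTwo)) +
          dist y (ξ (q n))) atTop (𝓝 0) := by
        have h1 : Tendsto (fun n => dist y (ξ (q n))) atTop (𝓝 0) := by
          rw [← dist_self y]
          exact (tendsto_const_nhds.dist hconv)
        simpa using hd.add h1
      exact ge_of_tendsto htend (Eventually.of_forall hle)
    -- minimality of y
    have hymin : ∀ z ∈ (p.2.1 : Set ellTwo),
        ‖y - (p.1 : ellTwo)‖ ≤ ‖z - (p.1 : ellTwo)‖ := by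
      intro z hz
      choose w hw hwd using fun n =>
        (q n).2.1.isCompact.exists_infDist_eq_dist (q n).2.1.nonempty z
      have hwz : Tendsto w atTop (𝓝 z) := by
        rw [tendsto_iff_dist_tendsto_zero]
        refine squeeze_zero (fun n => dist_nonneg) (fun n => ?_)
          (by simpa [hausdorffDist_comm] using hd)
        rw [dist_comm, ← hwd n]
        exact infDist_le_hausdorffDist_of_mem hz
          (by rw [EMetric.hausdorffEdist_comm]; exact hne n)
      have hlim1 : Tendsto (fun n => ‖ξ (q n) - ((q n).1 : ellTwo)‖) atTop
          (𝓝 ‖y - (p.1 : ellTwo)‖) := (hconv.sub hx).norm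
      have hlim2 : Tendsto (fun n => ‖w n - ((q n).1 : ellTwo)‖) atTop
          (𝓝 ‖z - (p.1 : ellTwo)‖) := (hwz.sub hx).norm
      exact le_of_tendsto_of_tendsto hlim1 hlim2
        (Eventually.of_forall fun n => hmin (q n) (w n) (hw n))
    have : y = ξ p := huniq p y hyK hymin
    rwa [this] at hconv
end

section
/- Let f : X → Y be a surjective continuous affine open map between compact convex sets, let B be a nonempty compact convex subset of Y, let A = f⁻¹(B), and let x be an exposed point of A. Then there exists an open neighborhood U of x in X such that f(A \ U) = B, and the closed convex hull A' of A \ U satisfies A' ≠ A and f(A') = B. -/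
/-!
Since every fiber of `f` over `B` has two points, every `b ∈ B` has a preimage in `A` on which
the exposing functional `φ` is strictly larger than `φ x`. As `f` is open, the sets of points of
`Y` having a preimage in `{φ > t}` are relatively open and grow as `t` decreases, so compactness
of `B` yields one level `c > φ x` with `B` covered by `f(A ∩ {φ ≥ c})`. With `U = {φ < c}` the
closed convex hull of `A \ U` stays in the half-space `{φ ≥ c}`, which misses `x`.
-/

open Set

theorem IsCompact.exists_gt_subset_of_antitone {F ι : Type*} [TopologicalSpace F] [LinearOrder ι]
    [NoMaxOrder ι] {Y B : Set F} (hB : IsCompact B) (hBY : B ⊆ Y) {W : ι → Set F}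
    (hW : Antitone W) (hWo : ∀ t, ∃ V, IsOpen V ∧ W t = V ∩ Y) {a : ι}
    (hcov : ∀ b ∈ B, ∃ t > a, b ∈ W t) : ∃ t > a, B ⊆ W t := by
  refine hB.induction_on (p := fun S ↦ ∃ t > a, S ⊆ W t) ?_ ?_ ?_ ?_
  · obtain ⟨t, ht⟩ := exists_gt a
    exact ⟨t, ht, empty_subset _⟩
  · rintro S T hST ⟨t, ht, hT⟩
    exact ⟨t, ht, hST.trans hT⟩
  · rintro S T ⟨s, hs, hS⟩ ⟨t, ht, hT⟩
    exact ⟨min s t, lt_min hs ht,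
      union_subset (hS.trans (hW (min_le_left s t))) (hT.trans (hW (min_le_right s t)))⟩
  · intro b hb
    obtain ⟨t, ht, hbt⟩ := hcov b hb
    obtain ⟨V, hV, hWt⟩ := hWo t
    refine ⟨B ∩ V, inter_mem_nhdsWithin B (hV.mem_nhds (hWt ▸ hbt).1), t, ht, ?_⟩
    rw [hWt]
    exact fun z hz ↦ ⟨hz.2, hBY hz.1⟩

theorem Convex.preimage_inter_of_affine {E F : Type*} [AddCommGroup E] [Module ℝ E]
    [AddCommGroup F] [Module ℝ F] {X : Set E} {B : Set F} {f : E → F} (hX : Convex ℝ X)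
    (hB : Convex ℝ B) (haff : ∀ x ∈ X, ∀ y ∈ X, ∀ t : ℝ, t ∈ Icc (0:ℝ) 1 →
      f (t • x + (1 - t) • y) = t • f x + (1 - t) • f y) :
    Convex ℝ (f ⁻¹' B ∩ X) := by
  rintro u ⟨hu, huX⟩ v ⟨hv, hvX⟩ s t hs ht hst
  obtain rfl : t = 1 - s := by linarith
  refine ⟨?_, hX huX hvX hs ht hst⟩
  rw [mem_preimage, haff u huX v hvX s ⟨hs, by linarith⟩]
  exact hB hu hv hs ht hst

theorem closure_convexHull_min {E : Type*} [AddCommGroup E] [Module ℝ E] [TopologicalSpace E]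
    {s t : Set E} (hst : s ⊆ t) (ht : Convex ℝ t) (htc : IsClosed t) :
    closure (convexHull ℝ s) ⊆ t :=
  closure_minimal (convexHull_min hst ht) htc

theorem exposed_point_shrinking_general
    (E F : Type*) [AddCommGroup E] [Module ℝ E] [TopologicalSpace E]
    [T2Space E]
    [AddCommGroup F] [Module ℝ F] [TopologicalSpace F]
    [T2Space F]
    (X : Set E) (Y : Set F) (hX : IsCompact X) (hXv : Convex ℝ X)
    (f : E → F) (hcont : ContinuousOn f X)
    (haff : ∀ x ∈ X, ∀ y ∈ X, ∀ t : ℝ, t ∈ Set.Icc (0:ℝ) 1 →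
      f (t • x + (1 - t) • y) = t • f x + (1 - t) • f y)
    (hopen : ∀ U : Set E, IsOpen U → ∃ V : Set F, IsOpen V ∧ f '' (U ∩ X) = V ∩ Y)
    (hfib : ∀ y ∈ Y, ∃ x₁ ∈ X, ∃ x₂ ∈ X, x₁ ≠ x₂ ∧ f x₁ = y ∧ f x₂ = y)
    (B : Set F) (hBc : IsCompact B) (hBv : Convex ℝ B)
    (hBY : B ⊆ Y)
    (A : Set E) (hA : A = f ⁻¹' B ∩ X)
    (x : E) (hxA : x ∈ A) (φ : E →L[ℝ] ℝ)
    (hexp : ∀ z ∈ A, z ≠ x → φ x < φ z) :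
    ∃ U : Set E, IsOpen U ∧ x ∈ U ∧ f '' (A \ U) = B ∧
      closure (convexHull ℝ (A \ U)) ≠ A ∧
      f '' closure (convexHull ℝ (A \ U)) = B := by
  have hAB : f '' A ⊆ B := hA ▸ image_subset_iff.2 inter_subset_left
  have hAconv : Convex ℝ A := hA ▸ hXv.preimage_inter_of_affine hBv haff
  have hAclosed : IsClosed A := by
    rw [hA, inter_comm]
    exact hcont.preimage_isClosed_of_isClosed hX.isClosed hBc.isClosed
  have hlift : ∀ b ∈ B, ∃ z ∈ X, f z = b ∧ φ x < φ z := by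
    intro b hb
    obtain ⟨x₁, h₁, x₂, h₂, hne, hf₁, hf₂⟩ := hfib b (hBY hb)
    have hfiber : (f ⁻¹' {b} ∩ X).Nontrivial := ⟨x₁, ⟨hf₁, h₁⟩, x₂, ⟨hf₂, h₂⟩, hne⟩
    obtain ⟨z, ⟨hzb : f z = b, hzX⟩, hzx⟩ := hfiber.exists_ne x
    exact ⟨z, hzX, hzb, hexp z (hA ▸ ⟨show f z ∈ B from hzb ▸ hb, hzX⟩) hzx⟩
  obtain ⟨c, hxc, hBW⟩ : ∃ c > φ x, B ⊆ f '' (φ ⁻¹' Ioi c ∩ X) := by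
    refine hBc.exists_gt_subset_of_antitone hBY
      (fun s t hst ↦ image_mono (inter_subset_inter_left _ (preimage_mono (Ioi_subset_Ioi hst))))
      (fun t ↦ hopen _ (isOpen_Ioi.preimage φ.continuous)) fun b hb ↦ ?_
    obtain ⟨z, hzX, rfl, hxz⟩ := hlift b hb
    obtain ⟨t, hxt, htz⟩ := exists_between hxz
    exact ⟨t, hxt, z, ⟨htz, hzX⟩, rfl⟩
  have hBimage : B ⊆ f '' (A \ φ ⁻¹' Iio c) := by
    rintro b hb
    obtain ⟨w, ⟨hwc, hwX⟩, rfl⟩ := hBW hb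
    exact ⟨w, ⟨hA ▸ ⟨hb, hwX⟩, (not_lt.2 hwc.le : ¬φ w < c)⟩, rfl⟩
  have hhull_ge : closure (convexHull ℝ (A \ φ ⁻¹' Iio c)) ⊆ φ ⁻¹' Ici c :=
    closure_convexHull_min (fun w hw ↦ (not_lt.1 hw.2 : c ≤ φ w))
      ((convex_Ici c).linear_preimage φ.toLinearMap) (isClosed_Ici.preimage φ.continuous)
  have hhull_A : closure (convexHull ℝ (A \ φ ⁻¹' Iio c)) ⊆ A :=
    closure_convexHull_min sdiff_subset hAconv hAclosed
  refine ⟨φ ⁻¹' Iio c, isOpen_Iio.preimage φ.continuous, hxc, ?_, ?_, ?_⟩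
  · exact ((image_mono sdiff_subset).trans hAB).antisymm hBimage
  · exact fun h ↦ not_le.2 hxc (hhull_ge (h.symm.subset hxA))
  · exact ((image_mono hhull_A).trans hAB).antisymm
      (hBimage.trans (image_mono ((subset_convexHull ℝ _).trans subset_closure)))

/-- Let `f : X → Y` be a surjective continuous affine open map
between compact convex sets (with fibers of more than one point), `B ⊆ Y` a
nonempty compact convex set, `A = f⁻¹(B) ∩ X`, and `x` an exposed point of `A`.
Then there is an open neighborhood `U` of `x` with `f(A \ U) = B`, and the closed
convex hull `A'` of `A \ U` satisfies `A' ≠ A` and `f(A') = B`. -/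
theorem exposed_point_shrinking
    (E F : Type*) [AddCommGroup E] [Module ℝ E] [TopologicalSpace E]
    [IsTopologicalAddGroup E] [ContinuousSMul ℝ E] [T2Space E] [LocallyConvexSpace ℝ E]
    [AddCommGroup F] [Module ℝ F] [TopologicalSpace F]
    [IsTopologicalAddGroup F] [ContinuousSMul ℝ F] [T2Space F] [LocallyConvexSpace ℝ F]
    (X : Set E) (Y : Set F) (hX : IsCompact X) (hXv : Convex ℝ X)
    (hY : IsCompact Y) (hYv : Convex ℝ Y)
    (f : E → F) (hcont : ContinuousOn f X) (hmaps : Set.MapsTo f X Y)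
    (haff : ∀ x ∈ X, ∀ y ∈ X, ∀ t : ℝ, t ∈ Set.Icc (0:ℝ) 1 →
      f (t • x + (1 - t) • y) = t • f x + (1 - t) • f y)
    (hsurj : f '' X = Y)
    (hopen : ∀ U : Set E, IsOpen U → ∃ V : Set F, IsOpen V ∧ f '' (U ∩ X) = V ∩ Y)
    (hfib : ∀ y ∈ Y, ∃ x₁ ∈ X, ∃ x₂ ∈ X, x₁ ≠ x₂ ∧ f x₁ = y ∧ f x₂ = y)
    (B : Set F) (hBne : B.Nonempty) (hBc : IsCompact B) (hBv : Convex ℝ B)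
    (hBY : B ⊆ Y)
    (A : Set E) (hA : A = f ⁻¹' B ∩ X)
    (x : E) (hxA : x ∈ A) (φ : E →L[ℝ] ℝ)
    (hexp : ∀ z ∈ A, z ≠ x → φ x < φ z) :
    ∃ U : Set E, IsOpen U ∧ x ∈ U ∧ f '' (A \ U) = B ∧
      closure (convexHull ℝ (A \ U)) ≠ A ∧
      f '' closure (convexHull ℝ (A \ U)) = B :=
  exposed_point_shrinking_general E F X Y hX hXv f hcont haff hopen hfib B hBc hBv hBY A hA x hxA φ
    hexp
end
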